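/- arXiv:1902.00747 — 5 statements merged into one kernel-verified Lean document; each statement's English description precedes it below -/
import Mathlib

section
/- Let G be the complete multipartite graph K_{n_1,…,n_k} of order n = n_1 + ⋯ + n_k (with n_i ≥ 1 for all i). Then the Seidel characteristic polynomial of G satisfies S_G(λ) = (λ+1)^{n−k} · ( ∏_{i=1}^{k} (λ + 1 − 2n_i) + ∑_{i=1}^{k} n_i ∏_{j≠i} (λ + 1 − 2n_j) ), which is the paper's formula S_G(λ) = (λ+1)^{n−k} (1 + ∑_{i=1}^{k} n_i/(λ+1−2n_i)) ∏_{i=1}^{k} (λ+1−2n_i) cleared of denominators. -/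
/-!
Let `P` be the 0/1 incidence matrix of the partition, i.e. `(1 : Matrix ι ι R).submatrix f id`
for the map `f` sending a vertex to its part. Then `S + I = P (2I - J) Pᵀ`, so `S + I` and the `k × k`
quotient matrix `(2I - J) PᵀP = (2I - J) diag(nᵢ) = diag(2nᵢ) - 1 nᵀ` have the same
characteristic polynomial up to a factor `X ^ (n - k)`. The quotient is a diagonal matrix
minus a rank-one matrix, whose characteristic polynomial is given by the matrix determinant lemma;
shifting `X` to `X + 1` gives the formula.
-/

open Polynomial Matrix Finset SimpleGraph

open scoped Classical in
noncomputable def seidelMatrix {V : Type*} [Fintype V] [DecidableEq V]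
    (G : SimpleGraph V) : Matrix V V ℝ :=
  (Matrix.of fun _ _ => (1 : ℝ)) - 1 - 2 • G.adjMatrix ℝ

namespace Matrix

section RankOne

variable {m : Type*} [Fintype m] [DecidableEq m]

theorem det_diagonal_add_vecMulVec_of_field {K : Type*} [Field K] (d u v : m → K)
    (hd : ∀ i, d i ≠ 0) :
    (diagonal d + vecMulVec u v).det = ∏ i, d i + ∑ i, u i * v i * ∏ j ∈ univ.erase i, d j := by
  have hfactor : diagonal d + vecMulVec u v = diagonal d * (1 + vecMulVec (u / d) v) := by
    rw [Matrix.mul_add, Matrix.mul_one, mul_vecMulVec]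
    congr 2
    ext i
    simp [mulVec_diagonal, mul_div_cancel₀ _ (hd i)]
  rw [hfactor, det_mul, det_diagonal, vecMulVec_eq Unit, det_one_add_replicateCol_mul_replicateRow,
    mul_add, mul_one, dotProduct, mul_sum]
  congr 1
  refine sum_congr rfl fun i _ => ?_
  rw [← mul_prod_erase univ d (mem_univ i), Pi.div_apply]
  field_simp [hd i]

theorem det_diagonal_add_vecMulVec {R : Type*} [CommRing R] [IsDomain R] (d u v : m → R)
    (hd : ∀ i, d i ≠ 0) :
    (diagonal d + vecMulVec u v).det = ∏ i, d i + ∑ i, u i * v i * ∏ j ∈ univ.erase i, d j := by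
  let f := algebraMap R (FractionRing R)
  apply IsFractionRing.injective R (FractionRing R)
  have hmap : f.mapMatrix (diagonal d + vecMulVec u v) =
      diagonal (f ∘ d) + vecMulVec (f ∘ u) (f ∘ v) := by
    ext i j
    simp [diagonal_apply, vecMulVec_apply, apply_ite f]
  have hfd : ∀ i, f (d i) ≠ 0 := fun i =>
    (map_ne_zero_iff f (IsFractionRing.injective R _)).mpr (hd i)
  rw [RingHom.map_det, hmap, det_diagonal_add_vecMulVec_of_field (f ∘ d) _ _ hfd]
  simp [f, map_prod, map_sum]

theorem charpoly_diagonal_sub_vecMulVec {R : Type*} [CommRing R] [IsDomain R] (a u v : m → R) :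
    (diagonal a - vecMulVec u v).charpoly =
      ∏ i, (X - C (a i)) + ∑ i, C (u i * v i) * ∏ j ∈ univ.erase i, (X - C (a j)) := by
  have hcharmatrix : charmatrix (diagonal a - vecMulVec u v) =
      diagonal (fun i => X - C (a i)) + vecMulVec (C ∘ u) (C ∘ v) := by
    ext i j
    by_cases h : i = j
    · subst h; simp [vecMulVec_apply]; ring
    · simp [vecMulVec_apply, h]
  rw [charpoly, hcharmatrix, det_diagonal_add_vecMulVec _ _ _ fun i => X_sub_C_ne_zero (a i)]
  simp

end RankOne

section Submatrix

variable {V ι R : Type*} [DecidableEq ι]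

theorem submatrix_eq_one_submatrix_mul [Fintype ι] [NonAssocSemiring R] (M : Matrix ι ι R)
    (f : V → ι) :
    M.submatrix f f =
      (1 : Matrix ι ι R).submatrix f id * (M * ((1 : Matrix ι ι R).submatrix f id)ᵀ) := by
  ext v w
  simp [mul_apply, one_apply]

theorem transpose_one_submatrix_mul_one_submatrix [Fintype V] [NonAssocSemiring R] (f : V → ι) :
    ((1 : Matrix ι ι R).submatrix f id)ᵀ * (1 : Matrix ι ι R).submatrix f id =
      diagonal fun i => (#{v | f v = i} : R) := by
  ext i j
  simp only [mul_apply, transpose_apply, submatrix_apply, id, one_apply, ite_zero_mul_ite_zero,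
    mul_one, diagonal_apply]
  by_cases h : i = j
  · subst h; simp [sum_boole]
  · rw [if_neg h]
    exact sum_eq_zero fun v _ => if_neg fun hv => h (hv.1.symm.trans hv.2)

theorem charpoly_submatrix [Fintype ι] [Fintype V] [DecidableEq V] [CommRing R]
    (M : Matrix ι ι R) (f : V → ι) (h : Fintype.card ι ≤ Fintype.card V) :
    (M.submatrix f f).charpoly =
      X ^ (Fintype.card V - Fintype.card ι) *
        (M * diagonal fun i => (#{v | f v = i} : R)).charpoly := by
  rw [submatrix_eq_one_submatrix_mul, charpoly_mul_comm_of_le _ _ h, Matrix.mul_assoc,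
    transpose_one_submatrix_mul_one_submatrix]

end Submatrix

end Matrix

theorem Finset.card_filter_sigma_fst {ι : Type*} [Fintype ι] [DecidableEq ι] {β : ι → Type*}
    [∀ i, Fintype (β i)] (i : ι) : #{v : Σ i, β i | v.1 = i} = Fintype.card (β i) := by
  rw [← Fintype.card_subtype, Fintype.card_congr (Equiv.sigmaSubtype i)]

section Seidel

variable {V ι : Type*} [Fintype V] [DecidableEq V] [Fintype ι] [DecidableEq ι]

open scoped Classical in
theorem seidelMatrix_apply (G : SimpleGraph ι) (i j : ι) :
    seidelMatrix G i j = if i = j then 0 else if G.Adj i j then -1 else 1 := by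
  simp only [seidelMatrix, Matrix.sub_apply, Matrix.smul_apply, of_apply, adjMatrix_apply,
    one_apply]
  split_ifs <;> simp_all
  norm_num

theorem seidelMatrix_comap_add_one (G : SimpleGraph ι) (f : V → ι) :
    seidelMatrix (G.comap f) + 1 = (seidelMatrix G + 1).submatrix f f := by
  ext v w
  by_cases h : f v = f w
  · by_cases hvw : v = w <;> simp [seidelMatrix_apply, one_apply, h, hvw]
  · have hvw : v ≠ w := fun e => h (congrArg f e)
    simp [seidelMatrix_apply, one_apply, h, hvw]
    rfl

theorem seidelMatrix_top_add_one :
    seidelMatrix (⊤ : SimpleGraph ι) + 1 = diagonal (fun _ => 2) - vecMulVec 1 1 := by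
  ext i j
  by_cases h : i = j
  · subst h; simp [seidelMatrix_apply]; norm_num
  · simp [seidelMatrix_apply, one_apply, h]

end Seidel

/-- **Theorem (Seidel characteristic polynomial of the complete multipartite graph).**
For `G = K_{n_1,…,n_k}` of order `n = n_1 + ⋯ + n_k` with all `n_i ≥ 1`,
`S_G(λ) = (λ+1)^{n-k} (∏_i (λ+1-2n_i) + ∑_i n_i ∏_{j≠i} (λ+1-2n_j))`. -/
theorem seidel_charpoly_completeMultipartite (k : ℕ) (n : Fin k → ℕ)
    (hn : ∀ i, 1 ≤ n i) :
    (seidelMatrix (completeMultipartiteGraph fun i => Fin (n i))).charpoly =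
      (X + 1) ^ ((∑ i, n i) - k) *
        ((∏ i, (X + 1 - 2 * (n i : ℝ[X]))) +
          ∑ i, (n i : ℝ[X]) * ∏ j ∈ Finset.univ.erase i, (X + 1 - 2 * (n j : ℝ[X]))) := by
  have hS : seidelMatrix (completeMultipartiteGraph fun i => Fin (n i)) =
      (diagonal (fun _ => 2) - vecMulVec 1 1 : Matrix (Fin k) (Fin k) ℝ).submatrix
        Sigma.fst Sigma.fst - scalar _ 1 := by
    rw [← seidelMatrix_top_add_one, ← seidelMatrix_comap_add_one]
    simp
  have hcard : Fintype.card (Fin k) ≤ Fintype.card (Σ i, Fin (n i)) := by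
    simpa using sum_le_sum fun i (_ : i ∈ univ) => hn i
  have hquotient : ((diagonal fun _ => 2) - vecMulVec 1 1 : Matrix (Fin k) (Fin k) ℝ) *
      diagonal (fun i => (n i : ℝ)) =
        diagonal (fun i => 2 * (n i : ℝ)) - vecMulVec 1 (fun i => (n i : ℝ)) := by
    rw [Matrix.sub_mul, diagonal_mul_diagonal, vecMulVec_mul]
    congr
    ext i
    simp [vecMul_diagonal]
  rw [hS, charpoly_sub_scalar, charpoly_submatrix _ _ hcard]
  simp only [card_filter_sigma_fst, Fintype.card_fin, Fintype.card_sigma]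
  rw [hquotient, charpoly_diagonal_sub_vecMulVec]
  simp [Polynomial.prod_comp, Polynomial.sum_comp, map_ofNat]
end

section
/- Let G be the complete multipartite graph K_{r_1·n_1,…,r_s·n_s} of order n = ∑_{i=1}^s r_i n_i, having exactly r_i parts of size n_i for each i = 1,…,s (the n_i pairwise distinct, r_i ≥ 1), and let k = ∑_{i=1}^s r_i. Then S_G(λ) = (λ+1)^{n−k} · ∏_{i=1}^{s} (λ+1−2n_i)^{r_i−1} · ( ∏_{i=1}^{s} (λ+1−2n_i) + ∑_{i=1}^{s} r_i n_i ∏_{j≠i} (λ+1−2n_j) ). -/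
/-!
`λI - S(G)` for `G = K_{n_1,…,n_k}` equals `D + J`, where `D` is block diagonal with blocks
`(λ+1)I - 2J` of sizes `n_p`. Over the fraction field of `ℝ[X]`, `D` maps the vector equal to
`(λ+1-2n_p)⁻¹` on the `p`-th part to the all-ones vector, so the matrix determinant lemma gives
`det (D + J) = det D · (1 + ∑_p n_p / (λ+1-2n_p))`, and each block contributes
`det ((λ+1)I - 2J) = (λ+1)^(n_p-1) (λ+1-2n_p)`. Grouping the parts by size gives the formula.
-/

open Polynomial Matrix Finset SimpleGraph

namespace Matrix

theorem det_blockDiagonal' {ι R : Type*} [Fintype ι] [DecidableEq ι] {m : ι → Type*}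
    [∀ i, Fintype (m i)] [∀ i, DecidableEq (m i)] [CommRing R] (M : ∀ i, Matrix (m i) (m i) R) :
    (blockDiagonal' M).det = ∏ i, (M i).det := by
  let _ : LinearOrder ι := LinearOrder.lift' _ (Fintype.equivFin ι).injective
  rw [(blockTriangular_blockDiagonal' M).det_fintype]
  refine prod_congr rfl fun i _ => ?_
  rw [← det_submatrix_equiv_self (Equiv.sigmaSubtype i).symm]
  congr 1
  ext a b
  exact blockDiagonal'_apply_eq M i a b

theorem blockDiagonal'_mulVec_apply {ι R : Type*} [Fintype ι] [DecidableEq ι] {m : ι → Type*}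
    [∀ i, Fintype (m i)] [NonUnitalNonAssocSemiring R] (M : ∀ i, Matrix (m i) (m i) R)
    (w : (Σ i, m i) → R) (i : ι) (a : m i) :
    (blockDiagonal' M *ᵥ w) ⟨i, a⟩ = (M i *ᵥ fun b => w ⟨i, b⟩) a := by
  simp only [mulVec, dotProduct, Fintype.sum_sigma]
  rw [sum_eq_single i]
  · simp [blockDiagonal'_apply_eq]
  · intro j _ hj
    simp [blockDiagonal'_apply_ne M _ _ hj.symm]
  · simp

theorem det_add_replicateCol_mul_replicateRow_of_mulVec_eq {m ι R : Type*} [Fintype m]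
    [DecidableEq m] [Unique ι] [CommRing R] {D : Matrix m m R} {u w : m → R} (h : D *ᵥ w = u)
    (v : m → R) :
    (D + replicateCol ι u * replicateRow ι v).det = D.det * (1 + v ⬝ᵥ w) := by
  rw [← h, replicateCol_mulVec, Matrix.mul_assoc, ← mul_one_add, det_mul,
    det_one_add_replicateCol_mul_replicateRow]

theorem replicateCol_one_mul_replicateRow_one {m ι R : Type*} [Unique ι] [NonAssocSemiring R] :
    replicateCol ι (fun _ : m => (1 : R)) * replicateRow ι (fun _ : m => (1 : R)) =
      of fun _ _ => 1 := by
  ext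
  simp [mul_apply]

section AllOnes

variable {m : Type*} [Fintype m] [DecidableEq m]

theorem mulVec_smul_one_sub_smul_allOnes {R : Type*} [CommRing R] (c a x : R) :
    (c • (1 : Matrix m m R) - a • of fun _ _ => 1) *ᵥ (fun _ => x) =
      fun _ => (c - a * Fintype.card m) * x := by
  rw [sub_mulVec, smul_mulVec, smul_mulVec, one_mulVec]
  ext
  simp only [Pi.sub_apply, Pi.smul_apply, smul_eq_mul, mulVec, dotProduct, of_apply, one_mul,
    sum_const, card_univ, nsmul_eq_mul]
  ring

theorem det_smul_one_sub_smul_allOnes {K : Type*} [Field K] [Nonempty m] {c : K} (hc : c ≠ 0)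
    (a : K) :
    (c • (1 : Matrix m m K) - a • of fun _ _ => 1).det =
      c ^ (Fintype.card m - 1) * (c - a * Fintype.card m) := by
  have hw : (c • (1 : Matrix m m K)) *ᵥ (fun _ => -a / c) = fun _ => -a := by
    ext
    simp [smul_mulVec, field]
  have hJ : c • (1 : Matrix m m K) - a • of (fun _ _ => 1) =
      c • 1 + replicateCol Unit (fun _ => -a) * replicateRow Unit (fun _ => (1 : K)) := by
    ext
    simp [mul_apply, sub_eq_add_neg]
  obtain ⟨k, hk⟩ : ∃ k, Fintype.card m = k + 1 := Nat.exists_eq_add_one.mpr Fintype.card_pos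
  rw [hJ, det_add_replicateCol_mul_replicateRow_of_mulVec_eq hw, det_smul, det_one, hk]
  simp only [mul_one, dotProduct, one_mul, sum_const, card_univ, hk, nsmul_eq_mul, Nat.cast_add,
    Nat.cast_one, add_tsub_cancel_right]
  field_simp
  ring

end AllOnes

theorem det_blockDiagonal'_add_allOnes {ι K : Type*} [Fintype ι] [DecidableEq ι] [Field K]
    {V : ι → Type*} [∀ i, Fintype (V i)] [∀ i, DecidableEq (V i)]
    (M : ∀ i, Matrix (V i) (V i) K) {d : ι → K} (hM : ∀ i, M i *ᵥ (fun _ => 1) = fun _ => d i)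
    (hd : ∀ i, d i ≠ 0) :
    (blockDiagonal' M + of fun _ _ => 1).det =
      (∏ i, (M i).det) * (1 + ∑ i, Fintype.card (V i) / d i) := by
  have hw : blockDiagonal' M *ᵥ (fun v => (d v.1)⁻¹) = fun _ => 1 := by
    ext ⟨i, a⟩
    have hconst : (fun _ : V i => (d i)⁻¹) = (d i)⁻¹ • fun _ => 1 := by ext; simp
    rw [blockDiagonal'_mulVec_apply, hconst, mulVec_smul, hM]
    simp [hd i]
  rw [← replicateCol_one_mul_replicateRow_one (ι := Unit),
    det_add_replicateCol_mul_replicateRow_of_mulVec_eq hw, det_blockDiagonal']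
  simp [dotProduct, Fintype.sum_sigma, div_eq_mul_inv]

end Matrix

theorem prod_mul_one_add_sum_div {ι K : Type*} [Fintype ι] [DecidableEq ι] [Field K]
    {d : ι → K} (hd : ∀ i, d i ≠ 0) (m : ι → K) :
    (∏ i, d i) * (1 + ∑ i, m i / d i) = ∏ i, d i + ∑ i, m i * ∏ j ∈ univ.erase i, d j := by
  rw [mul_add, mul_one, mul_sum]
  congr 1
  refine sum_congr rfl fun i _ => ?_
  rw [← mul_prod_erase univ d (mem_univ i)]
  field_simp [hd i]

theorem prod_pow_pred_mul_pow {ι M : Type*} [Fintype ι] [CommMonoid M] (c : M) (d : ι → M)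
    {r n : ι → ℕ} (hr : ∀ i, 1 ≤ r i) (hn : ∀ i, 1 ≤ n i) :
    ∏ i, (c ^ (n i - 1) * d i) ^ r i =
      c ^ (∑ i, r i * n i - ∑ i, r i) * (∏ i, d i ^ (r i - 1)) * ∏ i, d i := by
  have hexp : ∑ i, r i * n i - ∑ i, r i = ∑ i, (n i - 1) * r i := by
    rw [← sum_tsub_distrib _ fun i _ => Nat.le_mul_of_pos_right _ (hn i)]
    exact sum_congr rfl fun i _ => by rw [Nat.sub_mul, one_mul, mul_comm]
  rw [hexp, ← prod_pow_eq_pow_sum, mul_assoc, ← prod_mul_distrib, ← prod_mul_distrib]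
  refine prod_congr rfl fun i _ => ?_
  rw [← pow_succ, Nat.sub_add_cancel (hr i), mul_pow, pow_mul]

theorem X_add_one_sub_two_mul_natCast_ne_zero (m : ℕ) : (X + 1 - 2 * (m : ℝ[X])) ≠ 0 := by
  have : X + 1 - 2 * (m : ℝ[X]) = X + C (1 - 2 * m : ℝ) := by
    simp only [map_sub, map_one, map_mul, map_ofNat C 2, map_natCast]
    ring
  rw [this]
  exact X_add_C_ne_zero _

section CompleteMultipartite

variable {ι : Type*} [Fintype ι] [DecidableEq ι] (V : ι → Type*) [∀ i, Fintype (V i)]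
  [∀ i, DecidableEq (V i)]

theorem seidelMatrix_completeMultipartiteGraph_apply (v w : Σ i, V i) :
    seidelMatrix (completeMultipartiteGraph V) v w =
      if v = w then 0 else if v.1 = w.1 then 1 else -1 := by
  simp only [seidelMatrix, Matrix.sub_apply, of_apply, Matrix.one_apply, Matrix.smul_apply,
    adjMatrix_apply, completeMultipartiteGraph, comap_adj, top_adj]
  split_ifs <;> simp_all
  norm_num

theorem charmatrix_seidelMatrix_completeMultipartiteGraph :
    (seidelMatrix (completeMultipartiteGraph V)).charmatrix =
      blockDiagonal' (fun i => (X + 1 : ℝ[X]) • (1 : Matrix (V i) (V i) ℝ[X]) -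
        (2 : ℝ[X]) • of fun _ _ => 1) + of fun _ _ => 1 := by
  refine Matrix.ext fun ⟨i, a⟩ ⟨j, b⟩ => ?_
  rw [charmatrix_apply, seidelMatrix_completeMultipartiteGraph_apply]
  rcases eq_or_ne i j with rfl | hij
  · rcases eq_or_ne a b with rfl | hab
    · simp only [diagonal_apply_eq, ↓reduceIte, map_zero, sub_zero, smul_of, Matrix.add_apply,
        blockDiagonal'_apply_eq, Matrix.sub_apply, Matrix.smul_apply, one_apply_eq, smul_eq_mul,
        mul_one, of_apply, Pi.smul_apply]
      ring
    · simp [blockDiagonal'_apply_eq, hab]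
      norm_num
  · simp [blockDiagonal'_apply_ne _ _ _ hij, hij]

theorem map_charpoly_seidelMatrix_completeMultipartiteGraph [∀ i, Nonempty (V i)] {K : Type*}
    [Field K] (f : ℝ[X] →+* K) (hc : f (X + 1) ≠ 0)
    (hd : ∀ i, f (X + 1) - 2 * Fintype.card (V i) ≠ 0) :
    f (seidelMatrix (completeMultipartiteGraph V)).charpoly =
      (∏ i, f (X + 1) ^ (Fintype.card (V i) - 1) * (f (X + 1) - 2 * Fintype.card (V i))) *
        (1 + ∑ i, Fintype.card (V i) / (f (X + 1) - 2 * Fintype.card (V i))) := by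
  have hmap : f.mapMatrix (seidelMatrix (completeMultipartiteGraph V)).charmatrix =
      blockDiagonal' (fun i => f (X + 1) • (1 : Matrix (V i) (V i) K) - (2 : K) • of fun _ _ => 1) +
        of fun _ _ => 1 := by
    rw [charmatrix_seidelMatrix_completeMultipartiteGraph, RingHom.mapMatrix_apply,
      Matrix.map_add _ (map_add f), blockDiagonal'_map _ _ (map_zero f)]
    congr
    · ext i a b
      simp [Matrix.one_apply, apply_ite f, map_ofNat]
    · ext; simp
  rw [charpoly, RingHom.map_det, hmap, det_blockDiagonal'_add_allOnes _
      (fun i => (mulVec_smul_one_sub_smul_allOnes (m := V i) (f (X + 1)) (2 : K) 1).trans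
        (funext fun _ => mul_one _)) hd]
  simp only [det_smul_one_sub_smul_allOnes hc]

end CompleteMultipartite

theorem seidel_charpoly_completeMultipartite_mult_general (s : ℕ) (r n : Fin s → ℕ)
    (hr : ∀ i, 1 ≤ r i) (hn : ∀ i, 1 ≤ n i) :
    (seidelMatrix (completeMultipartiteGraph
        fun p : (i : Fin s) × Fin (r i) => Fin (n p.1))).charpoly =
      (X + 1) ^ ((∑ i, r i * n i) - ∑ i, r i) *
        (∏ i, (X + 1 - 2 * (n i : ℝ[X])) ^ (r i - 1)) *
        ((∏ i, (X + 1 - 2 * (n i : ℝ[X]))) +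
          ∑ i, (r i : ℝ[X]) * (n i : ℝ[X]) *
            ∏ j ∈ Finset.univ.erase i, (X + 1 - 2 * (n j : ℝ[X]))) := by
  obtain ⟨K, _, f, hf⟩ : ∃ (K : Type) (_ : Field K) (f : ℝ[X] →+* K), Function.Injective f :=
    ⟨FractionRing ℝ[X], inferInstance, algebraMap _ _, IsFractionRing.injective _ _⟩
  have hd (m : ℕ) : f X + 1 - 2 * m ≠ 0 := by
    simpa [map_ofNat f 2] using
      (map_ne_zero_iff f hf).mpr (X_add_one_sub_two_mul_natCast_ne_zero m)
  have (p : (i : Fin s) × Fin (r i)) : Nonempty (Fin (n p.1)) := ⟨⟨0, hn p.1⟩⟩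
  apply hf
  rw [map_charpoly_seidelMatrix_completeMultipartiteGraph _ f (by simpa using hd 0)
    fun p => by simpa using hd _]
  simp only [Fintype.card_fin, Fintype.prod_sigma, Fintype.sum_sigma, prod_const, sum_const,
    card_univ, map_mul, map_pow, map_add, map_sub, map_prod, map_sum, map_one, map_natCast,
    map_ofNat f 2, nsmul_eq_mul]
  rw [← prod_mul_one_add_sum_div (fun i => hd (n i)) (fun i => (r i : K) * n i),
    prod_pow_pred_mul_pow _ _ hr hn]
  simp only [mul_div_assoc, mul_assoc]

/-- **Theorem (Seidel characteristic polynomial of `K_{r_1·n_1,…,r_s·n_s}`).**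
The complete multipartite graph with exactly `r i` parts of size `n i` (the `n i`
pairwise distinct, `r i ≥ 1`, `n i ≥ 1`), of order `N = ∑ i, r i * n i` with
`k = ∑ i, r i` parts, has Seidel characteristic polynomial
`(λ+1)^{N-k} ∏_i (λ+1-2n_i)^{r_i-1} (∏_i (λ+1-2n_i) + ∑_i r_i n_i ∏_{j≠i} (λ+1-2n_j))`. -/
theorem seidel_charpoly_completeMultipartite_mult (s : ℕ) (r n : Fin s → ℕ)
    (hr : ∀ i, 1 ≤ r i) (hn : ∀ i, 1 ≤ n i) (hdist : Function.Injective n) :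
    (seidelMatrix (completeMultipartiteGraph
        fun p : (i : Fin s) × Fin (r i) => Fin (n p.1))).charpoly =
      (X + 1) ^ ((∑ i, r i * n i) - ∑ i, r i) *
        (∏ i, (X + 1 - 2 * (n i : ℝ[X])) ^ (r i - 1)) *
        ((∏ i, (X + 1 - 2 * (n i : ℝ[X]))) +
          ∑ i, (r i : ℝ[X]) * (n i : ℝ[X]) *
            ∏ j ∈ Finset.univ.erase i, (X + 1 - 2 * (n j : ℝ[X]))) :=
  seidel_charpoly_completeMultipartite_mult_general s r n hr hn
end

section
/- Let λ_n be the least Seidel eigenvalue (least eigenvalue of the Seidel matrix) of the complete multipartite graph K_{n_1,…,n_k} of order n = n_1 + ⋯ + n_k, where k ≥ 2 and n_i ≥ 1 for all i. Then λ_n ≤ n/k − 1 − (2/k) ∑_{1 ≤ i < j ≤ k} √(n_i n_j). -/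
open Polynomial Matrix Finset SimpleGraph

/-! The least eigenvalue of a real symmetric matrix is a lower bound for its Rayleigh quotients, so
it suffices to evaluate the Seidel quadratic form of `K_{n_1,…,n_k}` at one test vector. On this
graph `S = 2B - J - I`, where `B` is the all-ones matrix on each part; taking `x` equal to
`1/√n_i` on part `i` gives `xᵀx = k`, `xᵀBx = ∑ n_i` and
`xᵀJx = (∑ √n_i)² = n + 2∑_{i<j} √(n_i n_j)`, hence `λ k ≤ n - k - 2∑_{i<j} √(n_i n_j)`. -/

theorem Matrix.IsHermitian.mul_dotProduct_self_le_dotProduct_mulVec {n : Type*} [Fintype n]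
    [DecidableEq n] {A : Matrix n n ℝ} (hA : A.IsHermitian) {lam : ℝ}
    (hlam : ∀ μ : ℝ, (∃ v : n → ℝ, v ≠ 0 ∧ A *ᵥ v = μ • v) → lam ≤ μ) (x : n → ℝ) :
    lam * (x ⬝ᵥ x) ≤ x ⬝ᵥ A *ᵥ x := by
  have hM : (A - lam • 1).IsHermitian :=
    hA.sub (isHermitian_one.smul (IsSelfAdjoint.all lam))
  have hpsd : (A - lam • 1).PosSemidef := by
    refine hM.posSemidef_iff_eigenvalues_nonneg.mpr fun i => ?_
    have hv := hM.mulVec_eigenvectorBasis i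
    -- an eigenvector of `A - lam • 1` for `e` is an eigenvector of `A` for `e + lam`
    have hle := hlam (hM.eigenvalues i + lam) ⟨(hM.eigenvectorBasis i).ofLp, ?_, ?_⟩
    · simpa using hle
    · simpa using hM.eigenvectorBasis.orthonormal.ne_zero i
    · rw [sub_mulVec, smul_mulVec, one_mulVec, sub_eq_iff_eq_add] at hv
      rw [hv, add_smul]
  simpa [sub_mulVec, smul_mulVec, dotProduct_sub] using hpsd.dotProduct_mulVec_nonneg x

theorem seidelMatrix_isHermitian {V : Type*} [Fintype V] [DecidableEq V] (G : SimpleGraph V) :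
    (seidelMatrix G).IsHermitian := by
  classical
  have hJ : (of fun _ _ => (1 : ℝ) : Matrix V V ℝ).IsHermitian :=
    IsHermitian.ext fun _ _ => by simp
  exact (hJ.sub isHermitian_one).sub ((G.isHermitian_adjMatrix ℝ).smul (IsSelfAdjoint.all 2))

theorem sq_sum_eq_sum_sq_add_two_mul_sum_lt {ι R : Type*} [Fintype ι] [LinearOrder ι]
    [CommSemiring R] (f : ι → R) :
    (∑ i, f i) ^ 2 =
      ∑ i, f i ^ 2 + 2 * ∑ p ∈ univ.filter (fun p : ι × ι => p.1 < p.2), f p.1 * f p.2 := by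
  set g : ι × ι → R := fun p => f p.1 * f p.2
  have htrich (p : ι × ι) : g p =
      (if p.1 < p.2 then g p else 0) + (if p.2 < p.1 then g p else 0) +
        (if p.1 = p.2 then g p else 0) := by
    rcases lt_trichotomy p.1 p.2 with h | h | h
    · simp [h, h.ne, h.not_gt]
    · simp [h]
    · simp [h, h.ne', h.not_gt]
  have hdiag : ∑ p : ι × ι, (if p.1 = p.2 then g p else 0) = ∑ i, f i ^ 2 := by
    simp [g, Fintype.sum_prod_type, sq]
  have hswap : ∑ p ∈ univ.filter (fun p : ι × ι => p.2 < p.1), g p =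
      ∑ p ∈ univ.filter (fun p : ι × ι => p.1 < p.2), g p :=
    sum_nbij' Prod.swap Prod.swap (by simp) (by simp) (by simp) (by simp)
      (fun p _ => mul_comm _ _)
  rw [sq, Fintype.sum_mul_sum, ← Fintype.sum_prod_type', Fintype.sum_congr _ _ htrich,
    sum_add_distrib, sum_add_distrib, hdiag, ← sum_filter, ← sum_filter, hswap]
  ring

section CompleteMultipartite

variable {ι : Type*} {α : ι → Type*} [∀ i, Fintype (α i)]

noncomputable def partNormalizedVector (α : ι → Type*) [∀ i, Fintype (α i)] :
    (i : ι) × α i → ℝ :=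
  fun p => (√(Fintype.card (α p.1)))⁻¹

theorem sum_partNormalizedVector_part (i : ι) :
    ∑ a, partNormalizedVector α ⟨i, a⟩ = √(Fintype.card (α i)) := by
  -- the summand's `Fintype` instance mentions `⟨i, a⟩.1`, which blocks `sum_const` until
  -- the sum is restated
  change ∑ _a : α i, (√(Fintype.card (α i) : ℝ))⁻¹ = _
  rw [sum_const, card_univ, nsmul_eq_mul, ← div_eq_mul_inv, Real.div_sqrt]

variable [Fintype ι]

theorem partNormalizedVector_dotProduct_self [∀ i, Nonempty (α i)] :
    partNormalizedVector α ⬝ᵥ partNormalizedVector α = Fintype.card ι := by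
  rw [dotProduct, Fintype.sum_sigma]
  change ∑ i, ∑ _a : α i, (√(Fintype.card (α i) : ℝ))⁻¹ * (√(Fintype.card (α i) : ℝ))⁻¹ = _
  simp only [sum_const, card_univ, nsmul_eq_mul, ← mul_inv,
    Real.mul_self_sqrt (Nat.cast_nonneg _)]
  simp [Fintype.card_ne_zero]

variable [DecidableEq ι] [∀ i, DecidableEq (α i)]

theorem seidelMatrix_completeMultipartiteGraph_apply_s2 (p q : (i : ι) × α i) :
    seidelMatrix (completeMultipartiteGraph α) p q =
      2 * (if p.1 = q.1 then 1 else 0) - 1 - (if p = q then 1 else 0) := by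
  simp only [seidelMatrix, Matrix.sub_apply, of_apply, one_apply, Matrix.smul_apply,
    adjMatrix_apply, comap_adj, top_adj]
  split_ifs <;> simp_all <;> norm_num

theorem seidelMatrix_completeMultipartiteGraph_mulVec_apply (x : (i : ι) × α i → ℝ)
    (p : (i : ι) × α i) :
    (seidelMatrix (completeMultipartiteGraph α) *ᵥ x) p =
      2 * ∑ a, x ⟨p.1, a⟩ - ∑ q, x q - x p := by
  simp only [mulVec, dotProduct, seidelMatrix_completeMultipartiteGraph_apply_s2, sub_mul, ite_mul,
    one_mul, zero_mul, sum_sub_distrib, sum_ite_eq, mul_sum, Fintype.sum_sigma]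
  simp

theorem dotProduct_seidelMatrix_completeMultipartiteGraph_mulVec (x : (i : ι) × α i → ℝ) :
    x ⬝ᵥ seidelMatrix (completeMultipartiteGraph α) *ᵥ x =
      2 * ∑ i, (∑ a, x ⟨i, a⟩) ^ 2 - (∑ p, x p) ^ 2 - x ⬝ᵥ x := by
  have hblock : ∑ p, x p * (2 * ∑ a, x ⟨p.1, a⟩) = 2 * ∑ i, (∑ a, x ⟨i, a⟩) ^ 2 := by
    rw [Fintype.sum_sigma, mul_sum]
    refine sum_congr rfl fun i _ => ?_
    rw [sq, Finset.sum_mul, Finset.mul_sum]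
    exact sum_congr rfl fun a _ => by ring
  simp only [dotProduct, seidelMatrix_completeMultipartiteGraph_mulVec_apply, mul_sub,
    sum_sub_distrib, ← Finset.sum_mul, hblock, sq]

theorem dotProduct_seidelMatrix_completeMultipartiteGraph_mulVec_partNormalizedVector
    [∀ i, Nonempty (α i)] :
    partNormalizedVector α ⬝ᵥ
        seidelMatrix (completeMultipartiteGraph α) *ᵥ partNormalizedVector α =
      2 * ∑ i, (Fintype.card (α i) : ℝ) - (∑ i, √(Fintype.card (α i))) ^ 2 -
        Fintype.card ι := by
  rw [dotProduct_seidelMatrix_completeMultipartiteGraph_mulVec,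
    partNormalizedVector_dotProduct_self, Fintype.sum_sigma]
  simp only [sum_partNormalizedVector_part, Real.sq_sqrt (Nat.cast_nonneg _)]

end CompleteMultipartite

theorem least_seidel_eigenvalue_bound_general (k : ℕ) (hk : 2 ≤ k) (n : Fin k → ℕ)
    (hn : ∀ i, 1 ≤ n i) (lam : ℝ)
    (hleast : ∀ μ : ℝ, (∃ v : ((i : Fin k) × Fin (n i)) → ℝ, v ≠ 0 ∧
      (seidelMatrix (completeMultipartiteGraph fun i => Fin (n i))).mulVec v = μ • v) →
      lam ≤ μ) :
    lam ≤ (∑ i, (n i : ℝ)) / k - 1 -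
      (2 / k) * ∑ p ∈ Finset.univ.filter (fun p : Fin k × Fin k => p.1 < p.2),
        Real.sqrt ((n p.1) * (n p.2)) := by
  have : ∀ i, Nonempty (Fin (n i)) := fun i => ⟨⟨0, hn i⟩⟩
  have hk₀ : (0 : ℝ) < k := by exact_mod_cast (by omega : 0 < k)
  have hbound := (seidelMatrix_isHermitian _).mul_dotProduct_self_le_dotProduct_mulVec hleast
    (partNormalizedVector fun i => Fin (n i))
  rw [partNormalizedVector_dotProduct_self,
    dotProduct_seidelMatrix_completeMultipartiteGraph_mulVec_partNormalizedVector,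
    sq_sum_eq_sum_sq_add_two_mul_sum_lt] at hbound
  simp only [Fintype.card_fin, Real.sq_sqrt (Nat.cast_nonneg _),
    ← Real.sqrt_mul (Nat.cast_nonneg _)] at hbound
  rw [div_sub_one hk₀.ne', div_mul_eq_mul_div, div_sub_div_same, le_div_iff₀ hk₀]
  linarith

/-- **Theorem (upper bound for the least Seidel eigenvalue).**
If `lam` is the least Seidel eigenvalue of the complete multipartite graph
`K_{n_1,…,n_k}` of order `n = ∑ i, n i` (with `k ≥ 2`, all `n i ≥ 1`), then
`lam ≤ n/k - 1 - (2/k) ∑_{i<j} √(n_i n_j)`. -/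
theorem least_seidel_eigenvalue_bound (k : ℕ) (hk : 2 ≤ k) (n : Fin k → ℕ)
    (hn : ∀ i, 1 ≤ n i) (lam : ℝ)
    (hev : ∃ v : ((i : Fin k) × Fin (n i)) → ℝ, v ≠ 0 ∧
      (seidelMatrix (completeMultipartiteGraph fun i => Fin (n i))).mulVec v = lam • v)
    (hleast : ∀ μ : ℝ, (∃ v : ((i : Fin k) × Fin (n i)) → ℝ, v ≠ 0 ∧
      (seidelMatrix (completeMultipartiteGraph fun i => Fin (n i))).mulVec v = μ • v) →
      lam ≤ μ) :
    lam ≤ (∑ i, (n i : ℝ)) / k - 1 -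
      (2 / k) * ∑ p ∈ Finset.univ.filter (fun p : Fin k × Fin k => p.1 < p.2),
        Real.sqrt ((n p.1) * (n p.2)) :=
  least_seidel_eigenvalue_bound_general k hk n hn lam hleast
end

section
/- The characteristic polynomial of the adjacency matrix of the complete multipartite graph K_{n_1,…,n_k} of order n = n_1 + ⋯ + n_k equals λ^{n−k} ( λ^k − ∑_{m=2}^{k} (m−1) σ_m λ^{k−m} ), where σ_m = ∑_{1 ≤ j_1 < ⋯ < j_m ≤ k} n_{j_1} ⋯ n_{j_m} is the m-th elementary symmetric polynomial in n_1,…,n_k. -/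
/-!
Writing `P` for the vertex–part incidence matrix, the adjacency matrix of `K_{n_1,…,n_k}` is
`P A Pᵀ` with `A` the adjacency matrix of `K_k`, and `Pᵀ P = diag(n_1, …, n_k)`. Since `P A Pᵀ`
and `A Pᵀ P` have the same characteristic polynomial up to a factor `λ^{n-k}`, it remains to
compute that of `A D`, `D = diag(n_j)`. Its characteristic matrix is the diagonal matrix
`diag(λ + n_j)` minus a rank-one matrix, so by the matrix determinant lemma its determinant is
`Q - ∑_j n_j Q / (λ + n_j) = Q - (k Q - λ Q')` with `Q = ∏_j (λ + n_j) = ∑_m σ_m λ^{k-m}`, and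
the coefficient of `λ^{k-m}` in `Q - k Q + λ Q'` is `(1 - m) σ_m`.
-/

open Polynomial Matrix Finset SimpleGraph

/-- The `m`-th elementary symmetric polynomial `σ_m` in the part sizes
`n 0, …, n (k-1)`, as a real number. -/
noncomputable def esym {k : ℕ} (n : Fin k → ℕ) (m : ℕ) : ℝ :=
  ∑ t ∈ Finset.powersetCard m (Finset.univ : Finset (Fin k)), ∏ j ∈ t, (n j : ℝ)

namespace Matrix

variable {l m n ι : Type*} (R : Type*) [DecidableEq n]

def fiberIncidence [Zero R] [One R] (f : m → n) : Matrix m n R :=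
  of fun i j => if f i = j then 1 else 0

variable {R}

theorem submatrix_eq_fiberIncidence_mul_mul_transpose [Fintype n] [NonAssocSemiring R]
    (M : Matrix n n R) (f : m → n) (g : l → n) :
    M.submatrix f g = fiberIncidence R f * M * (fiberIncidence R g)ᵀ := by
  ext i j
  simp [fiberIncidence, mul_apply]

theorem fiberIncidence_transpose_mul_self [Fintype m] [NonAssocSemiring R] (f : m → n) :
    (fiberIncidence R f)ᵀ * fiberIncidence R f = diagonal fun j => (#{i | f i = j} : R) := by
  ext j j'
  simp only [fiberIncidence, mul_apply, transpose_apply, of_apply, mul_ite, mul_one, mul_zero,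
    ← ite_and]
  by_cases h : j = j'
  · simp [h, sum_boole]
  · rw [diagonal_apply_ne _ h]
    exact sum_eq_zero fun i _ => if_neg fun hi => h (hi.2.symm.trans hi.1)

theorem charpoly_submatrix_self [Fintype m] [Fintype n] [DecidableEq m] [CommRing R]
    (M : Matrix n n R) (f : m → n) (h : Fintype.card n ≤ Fintype.card m) :
    (M.submatrix f f).charpoly =
      X ^ (Fintype.card m - Fintype.card n) *
        (M * diagonal fun j => (#{i | f i = j} : R)).charpoly := by
  rw [submatrix_eq_fiberIncidence_mul_mul_transpose, Matrix.mul_assoc,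
    charpoly_mul_comm_of_le _ _ h, Matrix.mul_assoc, fiberIncidence_transpose_mul_self]

variable [Fintype ι] [DecidableEq ι]

theorem det_one_sub_vecMulVec [CommRing R] (u v : ι → R) :
    (1 - vecMulVec u v).det = 1 - v ⬝ᵥ u := by
  rw [sub_eq_add_neg, ← neg_vecMulVec, vecMulVec_eq Unit,
    det_one_add_replicateCol_mul_replicateRow, dotProduct_neg, sub_eq_add_neg]

theorem det_diagonal_sub_vecMulVec_of_field {K : Type*} [Field K] {a : ι → K}
    (ha : ∀ i, a i ≠ 0) (u v : ι → K) :
    (diagonal a - vecMulVec u v).det = ∏ i, a i - ∑ j, u j * v j * ∏ i ∈ univ.erase j, a i := by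
  have hfactor : diagonal a - vecMulVec u v = diagonal a * (1 - vecMulVec (a⁻¹ * u) v) := by
    rw [Matrix.mul_sub, Matrix.mul_one]
    congr 1
    ext i j
    simp [diagonal_mul, vecMulVec_apply, ← mul_assoc, ha i]
  rw [hfactor, det_mul, det_diagonal, det_one_sub_vecMulVec, mul_sub, mul_one, dotProduct,
    mul_sum]
  congr 1
  refine sum_congr rfl fun j _ => ?_
  rw [← mul_prod_erase univ a (mem_univ j), Pi.mul_apply, Pi.inv_apply]
  field_simp [ha j]

theorem det_diagonal_sub_vecMulVec [CommRing R] [IsDomain R] {a : ι → R}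
    (ha : ∀ i, a i ≠ 0) (u v : ι → R) :
    (diagonal a - vecMulVec u v).det = ∏ i, a i - ∑ j, u j * v j * ∏ i ∈ univ.erase j, a i := by
  let φ := algebraMap R (FractionRing R)
  have hφ : Function.Injective φ := IsFractionRing.injective R (FractionRing R)
  have hmap : (diagonal a - vecMulVec u v).map φ =
      diagonal (φ ∘ a) - vecMulVec (φ ∘ u) (φ ∘ v) := by
    ext i j
    by_cases h : i = j <;> simp [vecMulVec_apply, h]
  apply hφ
  rw [RingHom.map_det, RingHom.mapMatrix_apply, hmap,
    det_diagonal_sub_vecMulVec_of_field (a := φ ∘ a) fun i => (map_ne_zero_iff φ hφ).mpr (ha i)]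
  simp

end Matrix

namespace SimpleGraph

theorem adjMatrix_comap {V W R : Type*} [Zero R] [One R] (G : SimpleGraph V) (f : W → V)
    [DecidableRel G.Adj] [DecidableRel (G.comap f).Adj] :
    (G.comap f).adjMatrix R = (G.adjMatrix R).submatrix f f := by
  ext; simp

variable {ι R : Type*} [Fintype ι] [DecidableEq ι] [CommRing R]

theorem charmatrix_adjMatrix_top_mul_diagonal (d : ι → R) :
    charmatrix ((⊤ : SimpleGraph ι).adjMatrix R * diagonal d) =
      diagonal (fun j => X + C (d j)) - vecMulVec 1 (fun j => C (d j)) := by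
  ext i j : 1
  by_cases h : i = j
  · subst h; simp [mul_diagonal]
  · simp [mul_diagonal, h]

theorem charpoly_adjMatrix_top_mul_diagonal [IsDomain R] (d : ι → R) :
    ((⊤ : SimpleGraph ι).adjMatrix R * diagonal d).charpoly =
      ∏ j, (X + C (d j)) - ∑ j, C (d j) * ∏ i ∈ univ.erase j, (X + C (d i)) := by
  rw [charpoly, charmatrix_adjMatrix_top_mul_diagonal,
    det_diagonal_sub_vecMulVec fun i => X_add_C_ne_zero (d i)]
  simp

end SimpleGraph

theorem Polynomial.X_mul_derivative_C_mul_X_pow {R : Type*} [CommRing R] (a : R) (p : ℕ) :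
    X * derivative (C a * X ^ p) = (p : R[X]) * (C a * X ^ p) := by
  cases p with
  | zero => simp
  | succ q =>
    rw [derivative_C_mul_X_pow, Nat.add_sub_cancel, map_mul, map_natCast, pow_succ]
    ring

namespace Finset

variable {ι R : Type*} [CommRing R] (s : Finset ι) (c : ι → R)

theorem prod_X_add_C_eq_sum_esymm :
    ∏ j ∈ s, (X + C (c j)) =
      ∑ m ∈ range (#s + 1), C (∑ t ∈ s.powersetCard m, ∏ j ∈ t, c j) * X ^ (#s - m) := by
  have hmap : s.val.map (fun j => X + C (c j)) = (s.val.map c).map fun r => X + C r := by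
    rw [Multiset.map_map]; rfl
  rw [prod_eq_multiset_prod, hmap, Multiset.prod_X_add_C_eq_sum_esymm, Multiset.card_map,
    card_def]
  simp_rw [esymm_map_val]

variable [DecidableEq ι]

theorem sum_C_mul_prod_erase_X_add_C :
    ∑ j ∈ s, C (c j) * ∏ i ∈ s.erase j, (X + C (c i)) =
      ∑ m ∈ range (#s + 1),
        (m : R[X]) * C (∑ t ∈ s.powersetCard m, ∏ j ∈ t, c j) * X ^ (#s - m) := by
  set P := ∏ j ∈ s, (X + C (c j))
  have hterm : ∀ j ∈ s, C (c j) * ∏ i ∈ s.erase j, (X + C (c i)) =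
      P - X * ∏ i ∈ s.erase j, (X + C (c i)) := fun j hj => by
    simp only [P]; rw [← mul_prod_erase s _ hj]; ring
  have hderiv : derivative P = ∑ j ∈ s, ∏ i ∈ s.erase j, (X + C (c i)) := by
    simp [P, derivative_prod_finset]
  calc ∑ j ∈ s, C (c j) * ∏ i ∈ s.erase j, (X + C (c i))
      = (#s : R[X]) * P - X * derivative P := by
        rw [sum_congr rfl hterm, sum_sub_distrib, sum_const, nsmul_eq_mul, hderiv, mul_sum]
    _ = _ := by
        rw [show P = _ from prod_X_add_C_eq_sum_esymm s c, derivative_sum, mul_sum, mul_sum,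
          ← sum_sub_distrib]
        refine sum_congr rfl fun m hm => ?_
        rw [X_mul_derivative_C_mul_X_pow, Nat.cast_sub (Nat.lt_succ_iff.mp (mem_range.mp hm))]
        ring

theorem prod_X_add_C_sub_sum_C_mul_prod_erase :
    ∏ j ∈ s, (X + C (c j)) - ∑ j ∈ s, C (c j) * ∏ i ∈ s.erase j, (X + C (c i)) =
      X ^ #s - ∑ m ∈ Icc 2 #s,
        ((m : R[X]) - 1) * C (∑ t ∈ s.powersetCard m, ∏ j ∈ t, c j) * X ^ (#s - m) := by
  have hsplit : ∀ g : ℕ → R[X], g 1 = 0 →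
      ∑ m ∈ range (#s + 1), g m = g 0 + ∑ m ∈ Icc 2 #s, g m := fun g hg => by
    rw [← sum_insert (s := Icc 2 #s) (by simp)]
    refine (sum_subset (fun m => by simp only [mem_insert, mem_Icc, mem_range]; omega) fun m hm hm' => ?_).symm
    obtain rfl : m = 1 := by simp only [mem_range, mem_insert, mem_Icc, not_or] at hm hm'; omega
    exact hg
  rw [prod_X_add_C_eq_sum_esymm, sum_C_mul_prod_erase_X_add_C, ← sum_sub_distrib,
    hsplit _ (by simp), sub_eq_add_neg (X ^ #s), ← sum_neg_distrib]
  simp only [powersetCard_zero, sum_singleton, prod_empty, map_one, Nat.sub_zero, one_mul,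
    Nat.cast_zero, zero_mul, sub_zero]
  congr 1
  exact sum_congr rfl fun m _ => by ring

theorem card_filter_sigma_fst_eq {V : ι → Type*} [Fintype ι] [∀ i, Fintype (V i)] (j : ι) :
    #{v : Σ i, V i | v.1 = j} = Fintype.card (V j) := by
  rw [← card_univ (α := V j), ← card_map (Function.Embedding.sigmaMk j)]
  congr 1
  ext ⟨i, x⟩
  simp only [mem_filter, mem_univ, true_and, mem_map, Function.Embedding.sigmaMk_apply]
  constructor
  · rintro rfl; exact ⟨x, rfl⟩
  · rintro ⟨y, hy⟩; exact congrArg Sigma.fst hy.symm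

end Finset

open scoped Classical in
theorem adj_charpoly_completeMultipartite (k : ℕ) (n : Fin k → ℕ)
    (hn : ∀ i, 1 ≤ n i) :
    ((completeMultipartiteGraph fun i => Fin (n i)).adjMatrix ℝ).charpoly =
      X ^ ((∑ i, n i) - k) *
        (X ^ k - ∑ m ∈ Finset.Icc 2 k, ((m : ℝ[X]) - 1) * C (esym n m) * X ^ (k - m)) := by
  have hk : Fintype.card (Fin k) ≤ Fintype.card (Σ i, Fin (n i)) := by
    simpa [Fintype.card_sigma] using card_nsmul_le_sum univ n 1 fun i _ => hn i
  rw [adjMatrix_comap, charpoly_submatrix_self _ _ hk]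
  simp only [card_filter_sigma_fst_eq, Fintype.card_fin, Fintype.card_sigma]
  rw [charpoly_adjMatrix_top_mul_diagonal, prod_X_add_C_sub_sum_C_mul_prod_erase, card_univ,
    Fintype.card_fin]
  rfl
end

section
/- Let K_{n_1,…,n_k} and K_{q_1,…,q_k} be two complete k-partite graphs (all n_i, q_i ≥ 1) that are Seidel cospectral, i.e., their Seidel matrices have the same characteristic polynomial. If n_i = q_j for some indices i, j with 1 ≤ i, j ≤ k, then there exists a permutation π of {1,…,k} such that n_i = q_{π(i)} for all i = 1,…,k. -/
/-!
Write `S = E M Eᵀ - I`, where `E` is the vertex–part incidence matrix (`partMatrix`) and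
`M = 2I - J`. By the Weinstein–Aronszajn identity, `(x + 1)^k χ_S(x) = (x + 1)^N χ_Q(x + 1)`
with `Q = M · diag(n_i)` (`seidelQuotient`), so Seidel cospectrality gives `χ_Q(n) = χ_Q(q)`.
As `Q` is the rank-one perturbation `2 diag(n_i) - 1 nᵀ`, its characteristic polynomial `H` and
`P(y) = ∏ (y - 2 n_i)` (`partPoly`) satisfy `y P' = (k - 2) P + 2 H`. Hence `D = P_n - P_q`
solves `y D' = (k - 2) D` and is a monomial; it vanishes at the common nonzero root
`2 n_i = 2 q_j`, so `D = 0`, and `P_n = P_q` says that `n` and `q` take the same values with the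
same multiplicities.
-/

open Polynomial Matrix Finset SimpleGraph

theorem Fintype.exists_perm_apply_eq_of_map_univ_eq {α β : Type*} [Fintype α] [DecidableEq β]
    {f g : α → β} (h : univ.val.map f = univ.val.map g) :
    ∃ σ : Equiv.Perm α, ∀ a, f a = g (σ a) := by
  have hfiber (b : β) : Fintype.card {a // f a = b} = Fintype.card {a // g a = b} := by
    have := congrArg (Multiset.count b) h
    simp only [Multiset.count_map, eq_comm (a := b)] at this
    rw [Fintype.card_subtype, Fintype.card_subtype]
    exact this
  exact ⟨Equiv.ofFiberEquiv fun b => Fintype.equivOfCardEq (hfiber b),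
    fun a => (Equiv.ofFiberEquiv_map _ a).symm⟩

theorem Polynomial.eq_zero_of_X_mul_derivative_eq_C_mul {R : Type*} [CommRing R] [IsDomain R]
    [CharZero R] {p : R[X]} {c : R} (hp : X * derivative p = C c * p) {r : R} (hr : r ≠ 0)
    (hroot : p.IsRoot r) : p = 0 := by
  have hcoeff (j : ℕ) (hj : p.coeff j ≠ 0) : (j : R) = c := by
    refine mul_right_cancel₀ hj ?_
    rcases j with _ | j
    · simpa [eq_comm] using congrArg (coeff · 0) hp
    · simpa [coeff_derivative, mul_comm] using congrArg (coeff · (j + 1)) hp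
  by_contra hp0
  obtain ⟨j, hj⟩ := not_forall.1 (Polynomial.ext_iff.not.1 hp0)
  have hmonomial : p = C (p.coeff j) * X ^ j := by
    ext i
    rw [coeff_C_mul_X_pow]
    split_ifs with hij
    · rw [hij]
    · by_contra hi
      exact hij (Nat.cast_injective ((hcoeff i hi).trans (hcoeff j hj).symm))
  rw [IsRoot, hmonomial] at hroot
  exact hj (by simpa [hr] using hroot)

theorem Matrix.det_diagonal_add_vecMulVec_of_field_s6 {ι K : Type*} [Fintype ι] [DecidableEq ι]
    [Field K] {d : ι → K} (hd : ∀ i, d i ≠ 0) (u v : ι → K) :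
    (diagonal d + vecMulVec u v).det =
      ∏ i, d i + ∑ i, u i * v i * ∏ j ∈ univ.erase i, d j := by
  have hfactor : diagonal d + vecMulVec u v = diagonal d * (1 + vecMulVec (u / d) v) := by
    rw [Matrix.mul_add, Matrix.mul_one]
    congr 1
    ext i j
    rw [diagonal_mul, vecMulVec_apply, vecMulVec_apply, Pi.div_apply]
    field_simp [hd i]
  rw [hfactor, det_mul, det_diagonal, vecMulVec_eq Unit, det_one_add_replicateCol_mul_replicateRow,
    mul_add, mul_one, dotProduct, Finset.mul_sum]
  congr 1
  refine Finset.sum_congr rfl fun i _ => ?_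
  rw [← Finset.mul_prod_erase univ d (mem_univ i), Pi.div_apply]
  field_simp [hd i]

theorem Matrix.det_diagonal_add_vecMulVec_s6 {ι R : Type*} [Fintype ι] [DecidableEq ι] [CommRing R]
    [IsDomain R] {d : ι → R} (hd : ∀ i, d i ≠ 0) (u v : ι → R) :
    (diagonal d + vecMulVec u v).det =
      ∏ i, d i + ∑ i, u i * v i * ∏ j ∈ univ.erase i, d j := by
  let f := algebraMap R (FractionRing R)
  have hmap : f.mapMatrix (diagonal d + vecMulVec u v) =
      diagonal (f ∘ d) + vecMulVec (f ∘ u) (f ∘ v) := by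
    ext i j
    by_cases hij : i = j <;> simp [vecMulVec_apply, hij]
  apply IsFractionRing.injective R (FractionRing R)
  rw [RingHom.map_det, hmap, det_diagonal_add_vecMulVec_of_field_s6 (fun i => by simpa [f] using hd i)]
  simp [f]

section PartPoly

variable {ι : Type*} [Fintype ι]

noncomputable def partPoly (m : ι → ℝ) : ℝ[X] := ∏ i, (X - C (2 * m i))

theorem roots_partPoly (m : ι → ℝ) : (partPoly m).roots = univ.val.map fun i => 2 * m i := by
  rw [partPoly, Finset.prod_eq_multiset_prod,
    ← roots_multiset_prod_X_sub_C (univ.val.map fun i => 2 * m i), Multiset.map_map]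
  rfl

theorem isRoot_partPoly (m : ι → ℝ) (i : ι) : (partPoly m).IsRoot (2 * m i) := by
  rw [IsRoot, partPoly, eval_prod]
  exact prod_eq_zero (mem_univ i) (by simp)

theorem exists_perm_apply_eq_of_partPoly_eq {m m' : ι → ℕ}
    (h : partPoly (fun i => (m i : ℝ)) = partPoly fun i => (m' i : ℝ)) :
    ∃ σ : Equiv.Perm ι, ∀ i, m i = m' (σ i) := by
  have hroots := congrArg roots h
  rw [roots_partPoly, roots_partPoly] at hroots
  have hinj : Function.Injective fun x : ℕ => 2 * (x : ℝ) := fun a b hab => by simpa using hab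
  refine Fintype.exists_perm_apply_eq_of_map_univ_eq (Multiset.map_injective hinj ?_)
  simpa [Multiset.map_map, Function.comp_def] using hroots

end PartPoly

section CompleteMultipartite

variable {ι : Type*} [Fintype ι] [DecidableEq ι]

def partMatrix (V : ι → Type*) : Matrix (Σ i, V i) ι ℝ :=
  of fun v i => if v.1 = i then 1 else 0

theorem partMatrix_mul_mul_transpose (V : ι → Type*) (M : Matrix ι ι ℝ) :
    partMatrix V * M * (partMatrix V)ᵀ = M.submatrix Sigma.fst Sigma.fst := by
  ext v w
  simp [partMatrix, mul_apply]

theorem partMatrix_transpose_mul (V : ι → Type*) [∀ i, Fintype (V i)] :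
    (partMatrix V)ᵀ * partMatrix V = diagonal fun i => (Fintype.card (V i) : ℝ) := by
  ext i j
  rw [mul_apply, ← univ_sigma_univ, sum_sigma, diagonal_apply]
  rcases eq_or_ne i j with rfl | hij
  · simp [partMatrix]
  · simp [partMatrix, hij, hij.symm]

theorem seidelMatrix_completeMultipartiteGraph (V : ι → Type*) [∀ i, Fintype (V i)]
    [∀ i, DecidableEq (V i)] :
    seidelMatrix (completeMultipartiteGraph V) =
      (2 • 1 - of fun _ _ => 1 : Matrix ι ι ℝ).submatrix Sigma.fst Sigma.fst - 1 := by
  ext v w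
  simp only [seidelMatrix, Matrix.sub_apply, Matrix.smul_apply, of_apply, adjMatrix_apply,
    one_apply, submatrix_apply, completeMultipartiteGraph, comap_adj, top_adj]
  by_cases h : v.1 = w.1
  · norm_num [h]
  · norm_num [h, Sigma.ext_iff]

def seidelQuotient (m : ι → ℝ) : Matrix ι ι ℝ :=
  (2 • 1 - of fun _ _ => 1 : Matrix ι ι ℝ) * diagonal m

theorem charpoly_seidelMatrix_completeMultipartiteGraph (V : ι → Type*) [∀ i, Fintype (V i)]
    [∀ i, DecidableEq (V i)] :
    (X + 1) ^ Fintype.card ι * (seidelMatrix (completeMultipartiteGraph V)).charpoly =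
      (X + 1) ^ Fintype.card (Σ i, V i) *
        (seidelQuotient fun i => (Fintype.card (V i) : ℝ)).charpoly.comp (X + 1) := by
  have hsub (A : Matrix (Σ i, V i) (Σ i, V i) ℝ) :
      (A - 1).charpoly = A.charpoly.comp (X + 1) := by
    simpa using charpoly_sub_scalar A 1
  rw [seidelMatrix_completeMultipartiteGraph, ← partMatrix_mul_mul_transpose, Matrix.mul_assoc,
    hsub]
  have := congrArg (·.comp (X + 1)) (charpoly_mul_comm' (partMatrix V)
    ((2 • 1 - of fun _ _ => 1 : Matrix ι ι ℝ) * (partMatrix V)ᵀ))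
  simpa [mul_comp, Matrix.mul_assoc, partMatrix_transpose_mul, seidelQuotient] using this

theorem charpoly_seidelQuotient_eq_of_cospectral {V W : ι → Type*} [∀ i, Fintype (V i)]
    [∀ i, DecidableEq (V i)] [∀ i, Fintype (W i)] [∀ i, DecidableEq (W i)]
    (h : (seidelMatrix (completeMultipartiteGraph V)).charpoly =
      (seidelMatrix (completeMultipartiteGraph W)).charpoly) :
    (seidelQuotient fun i => (Fintype.card (V i) : ℝ)).charpoly =
      (seidelQuotient fun i => (Fintype.card (W i) : ℝ)).charpoly := by
  have hcard : Fintype.card (Σ i, V i) = Fintype.card (Σ i, W i) := by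
    simpa [charpoly_natDegree_eq_dim] using congrArg natDegree h
  have hcomp := charpoly_seidelMatrix_completeMultipartiteGraph V
  rw [h, charpoly_seidelMatrix_completeMultipartiteGraph W, hcard] at hcomp
  have hX : (X + 1 : ℝ[X]) ≠ 0 := by simpa using X_add_C_ne_zero (1 : ℝ)
  apply (algEquivAevalXAddC (1 : ℝ)).injective
  simpa [comp_eq_aeval] using (mul_left_cancel₀ (pow_ne_zero _ hX) hcomp).symm

theorem charmatrix_seidelQuotient (m : ι → ℝ) :
    charmatrix (seidelQuotient m) =
      diagonal (fun i => X - C (2 * m i)) + vecMulVec 1 (fun i => C (m i)) := by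
  refine Matrix.ext fun i j => ?_
  simp only [seidelQuotient, charmatrix_apply, mul_diagonal, Matrix.sub_apply, Matrix.smul_apply,
    one_apply, of_apply, Matrix.add_apply, diagonal_apply, vecMulVec_apply]
  by_cases h : i = j
  · subst h
    simp only [↓reduceIte, nsmul_eq_mul, Nat.cast_ofNat, mul_one, C_mul, C_sub, map_one,
      Pi.one_apply, one_mul]
    ring
  · simp [h]

theorem charpoly_seidelQuotient (m : ι → ℝ) :
    (seidelQuotient m).charpoly =
      partPoly m + ∑ i, C (m i) * ∏ j ∈ univ.erase i, (X - C (2 * m j)) := by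
  rw [charpoly, charmatrix_seidelQuotient, det_diagonal_add_vecMulVec_s6 (fun i => X_sub_C_ne_zero _)]
  simp [partPoly]

theorem X_mul_derivative_partPoly (m : ι → ℝ) :
    X * derivative (partPoly m) =
      C ((Fintype.card ι : ℝ) - 2) * partPoly m + 2 * (seidelQuotient m).charpoly := by
  have hX (i : ι) : X * ∏ j ∈ univ.erase i, (X - C (2 * m j)) =
      partPoly m + 2 * (C (m i) * ∏ j ∈ univ.erase i, (X - C (2 * m j))) := by
    rw [partPoly, ← mul_prod_erase univ _ (mem_univ i), C_mul, C_ofNat]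
    ring
  rw [charpoly_seidelQuotient, partPoly, derivative_prod_finset]
  simp only [derivative_sub, derivative_X, derivative_C, sub_zero, mul_one, Finset.mul_sum, hX]
  rw [sum_add_distrib, ← Finset.mul_sum, sum_const, card_univ, ← partPoly, nsmul_eq_mul, C_sub,
    map_natCast, C_ofNat]
  ring

end CompleteMultipartite

theorem seidel_cospectral_multipartite_perm_general (k : ℕ) (n q : Fin k → ℕ)
    (hn : ∀ i, 1 ≤ n i)
    (hcospec : (seidelMatrix (completeMultipartiteGraph fun i => Fin (n i))).charpoly =
      (seidelMatrix (completeMultipartiteGraph fun i => Fin (q i))).charpoly)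
    (hmatch : ∃ i j, n i = q j) :
    ∃ π : Equiv.Perm (Fin k), ∀ i, n i = q (π i) := by
  obtain ⟨i₀, j₀, hij⟩ := hmatch
  have hquot := charpoly_seidelQuotient_eq_of_cospectral hcospec
  simp only [Fintype.card_fin] at hquot
  set D := partPoly (fun i => (n i : ℝ)) - partPoly fun i => (q i : ℝ)
  have hD : X * derivative D = C ((k : ℝ) - 2) * D := by
    have hn' := X_mul_derivative_partPoly fun i => (n i : ℝ)
    have hq' := X_mul_derivative_partPoly fun i => (q i : ℝ)
    rw [Fintype.card_fin] at hn' hq'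
    rw [derivative_sub]
    linear_combination hn' - hq' + 2 * hquot
  have hroot : D.IsRoot (2 * n i₀) := by
    have hn₀ : (partPoly fun i => (n i : ℝ)).IsRoot (2 * n i₀) := isRoot_partPoly _ i₀
    have hq₀ : (partPoly fun i => (q i : ℝ)).IsRoot (2 * n i₀) :=
      hij ▸ isRoot_partPoly _ j₀
    rw [IsRoot.def, eval_sub, hn₀.eq_zero, hq₀.eq_zero, sub_zero]
  have hpos : (2 * n i₀ : ℝ) ≠ 0 := by have := hn i₀; positivity
  exact exists_perm_apply_eq_of_partPoly_eq
    (sub_eq_zero.1 (eq_zero_of_X_mul_derivative_eq_C_mul hD hpos hroot))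

/-- **Theorem.** If the complete `k`-partite graphs `K_{n_1,…,n_k}` and
`K_{q_1,…,q_k}` are Seidel cospectral (their Seidel matrices have the same
characteristic polynomial) and `n i = q j` for some `i, j`, then there is a
permutation `π` with `n i = q (π i)` for all `i`. -/
theorem seidel_cospectral_multipartite_perm (k : ℕ) (n q : Fin k → ℕ)
    (hn : ∀ i, 1 ≤ n i) (hq : ∀ i, 1 ≤ q i)
    (hcospec : (seidelMatrix (completeMultipartiteGraph fun i => Fin (n i))).charpoly =
      (seidelMatrix (completeMultipartiteGraph fun i => Fin (q i))).charpoly)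
    (hmatch : ∃ i j, n i = q j) :
    ∃ π : Equiv.Perm (Fin k), ∀ i, n i = q (π i) :=
  seidel_cospectral_multipartite_perm_general k n q hn hcospec hmatch
end
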